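/- Let S⁴' = {x ∈ S⁶ : x₆ = x₇ = 0}. The set Δ_σ = {x ∈ S⁴' : x₁ ≥ 0, x₁² + x₂² + x₃² ≤ 1/2, x₄² + x₅² ≥ 1/2} ∪ {x ∈ S⁴' : x₁ < 0, x₁² + x₄² + x₅² ≥ 1/2, x₂² + x₃² ≤ 1/2} is homeomorphic to the closed unit ball in ℝ⁴, and its frontier as a subset of the topological space S⁴' equals Σ = {x ∈ S⁶ : x₁ ≥ 0, x₁² + x₂² + x₃² = 1/2, x₄² + x₅² = 1/2} ∪ {x ∈ S⁶ : x₁ < 0, x₁² + x₄² + x₅² = 1/2, x₂² + x₃² = 1/2}. -/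

import Mathlib

/-!
Coordinates are indexed from 0, so the paper's `x₁` is `x 0`.

On `S4'` both pieces of `DeltaSigma` and of `SigmaSet` are cut out by the single function
`level x = x 1 ^ 2 + x 2 ^ 2 + max (x 0) 0 ^ 2`: `DeltaSigma = {level ≤ 1/2}` and
`SigmaSet = {level = 1/2}`.

Fixing `c = x 1 ^ 2 + x 2 ^ 2 ≤ 1/2`, the slice of `S4'` is the 2-sphere of radius
`R = √(1 - c)` in the coordinates `(x 0, x 3, x 4)`, and the slice of `DeltaSigma` is its cap
`x 0 ≤ H = √(1/2 - c)`. Dividing `(x 3, x 4)` by `√((R + H) (R - x 0))` sends the point of the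
cap at height `a` to squared radius `(R + a) / (R + H)`, which is affine in `a`; so the cap goes
bijectively onto the unit disc. This identifies `DeltaSigma` with a product of two discs, a
compact convex body in `ℝ⁴`, hence with the closed ball.

Since `level` is continuous, the frontier of `{level ≤ 1/2}` lies in `{level = 1/2}`.
Conversely, a point `y` of `SigmaSet` splits into orthogonal halves
`A = (max (y 0) 0, y 1, y 2, 0, 0)` and `B = y - A` of squared norm `1/2`, and on the great
circle `√(1 + t) A + √(1 - t) B` the level is `(1 + t) / 2`, which exceeds `1/2` for `t > 0`.
-/

noncomputable section

abbrev E (n : ℕ) : Type := EuclideanSpace ℝ (Fin n)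

/-- The subsphere `S⁴' = {x ∈ S⁶ : x₆ = x₇ = 0}`. -/
def S4' : Set (E 7) :=
  {x | x ∈ Metric.sphere (0 : E 7) 1 ∧ x 5 = 0 ∧ x 6 = 0}

/-- The 4-disk `Δ_σ`. -/
def DeltaSigma : Set (E 7) :=
  {x | x ∈ S4' ∧ 0 ≤ x 0 ∧
       x 0 ^ 2 + x 1 ^ 2 + x 2 ^ 2 ≤ 1 / 2 ∧ 1 / 2 ≤ x 3 ^ 2 + x 4 ^ 2} ∪
  {x | x ∈ S4' ∧ x 0 < 0 ∧
       1 / 2 ≤ x 0 ^ 2 + x 3 ^ 2 + x 4 ^ 2 ∧ x 1 ^ 2 + x 2 ^ 2 ≤ 1 / 2}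

/-- The sphere `Σ = σ(S³) ⊂ S⁶` of the paper. -/
def SigmaSet : Set (E 7) :=
  {x | x ∈ Metric.sphere (0 : E 7) 1 ∧ 0 ≤ x 0 ∧
       x 0 ^ 2 + x 1 ^ 2 + x 2 ^ 2 = 1 / 2 ∧ x 3 ^ 2 + x 4 ^ 2 = 1 / 2} ∪
  {x | x ∈ Metric.sphere (0 : E 7) 1 ∧ x 0 < 0 ∧
       x 0 ^ 2 + x 3 ^ 2 + x 4 ^ 2 = 1 / 2 ∧ x 1 ^ 2 + x 2 ^ 2 = 1 / 2}

open Set Metric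

theorem Set.BijOn.nonempty_homeomorph_of_isCompact {X Y : Type*} [TopologicalSpace X]
    [TopologicalSpace Y] [T2Space Y] {f : X → Y} {s : Set X} {t : Set Y} (hf : BijOn f s t)
    (hs : IsCompact s) (hfc : ContinuousOn f s) : Nonempty (s ≃ₜ t) :=
  have := isCompact_iff_compactSpace.mp hs
  ⟨Continuous.homeoOfEquivCompactToT2 (f := hf.equiv f) (hfc.mapsToRestrict hf.mapsTo)⟩

theorem Convex.nonempty_homeomorph_closedBall {F : Type*} [NormedAddCommGroup F]
    [NormedSpace ℝ F] {s : Set F} (hconv : Convex ℝ s) (hclosed : IsClosed s)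
    (hbdd : Bornology.IsBounded s) (hint : (interior s).Nonempty) :
    Nonempty (s ≃ₜ closedBall (0 : F) 1) := by
  obtain ⟨e, -, he, -⟩ := exists_homeomorph_image_eq hconv hint
    ((NormedSpace.isVonNBounded_iff ℝ).2 hbdd) (convex_closedBall 0 1)
    ⟨0, mem_interior_iff_mem_nhds.2 (closedBall_mem_nhds 0 one_pos)⟩
    ((NormedSpace.isVonNBounded_iff ℝ).2 isBounded_closedBall)
  rw [hclosed.closure_eq, isClosed_closedBall.closure_eq] at he
  exact ⟨(e.image s).trans (Homeomorph.setCongr he)⟩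

namespace SigmaDisk

lemma norm_sq_eq_E7 (x : E 7) :
    ‖x‖ ^ 2 = x 0 ^ 2 + x 1 ^ 2 + x 2 ^ 2 + x 3 ^ 2 + x 4 ^ 2 + x 5 ^ 2 + x 6 ^ 2 := by
  simp [EuclideanSpace.norm_sq_eq, Fin.sum_univ_seven]

lemma mem_S4'_iff {x : E 7} :
    x ∈ S4' ↔ x 5 = 0 ∧ x 6 = 0 ∧ x 0 ^ 2 + x 1 ^ 2 + x 2 ^ 2 + x 3 ^ 2 + x 4 ^ 2 = 1 := by
  rw [S4', mem_ofPred_eq, mem_sphere_zero_iff_norm,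
    ← pow_eq_one_iff_of_nonneg (norm_nonneg x) two_ne_zero, norm_sq_eq_E7]
  constructor
  · rintro ⟨h, h5, h6⟩
    exact ⟨h5, h6, by simpa [h5, h6] using h⟩
  · rintro ⟨h5, h6, h⟩
    exact ⟨by simpa [h5, h6] using h, h5, h6⟩

lemma isClosed_S4' : IsClosed S4' :=
  isClosed_sphere.inter
    ((isClosed_eq (by fun_prop) continuous_const).inter
      (isClosed_eq (by fun_prop) continuous_const))

def level (x : E 7) : ℝ := x 1 ^ 2 + x 2 ^ 2 + max (x 0) 0 ^ 2

lemma continuous_level : Continuous level := by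
  unfold level
  fun_prop

lemma DeltaSigma_subset_S4' : DeltaSigma ⊆ S4' := by
  rintro x (h | h) <;> exact h.1

lemma mem_DeltaSigma_iff_of_mem {x : E 7} (hx : x ∈ S4') :
    x ∈ DeltaSigma ↔ level x ≤ 1 / 2 := by
  have hs := (mem_S4'_iff.1 hx).2.2
  rcases le_or_gt 0 (x 0) with h0 | h0
  · simp only [DeltaSigma, level, mem_union, mem_ofPred_eq, hx, h0, max_eq_left h0,
      not_lt.2 h0, true_and, false_and, or_false]
    exact ⟨fun h => by linarith [h.1], fun h => ⟨by linarith, by linarith⟩⟩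
  · simp only [DeltaSigma, level, mem_union, mem_ofPred_eq, hx, h0, max_eq_right h0.le,
      not_le.2 h0, true_and, false_and, false_or]
    exact ⟨fun h => by linarith [h.2], fun h => ⟨by linarith, by linarith⟩⟩

lemma mem_SigmaSet_iff_of_mem {x : E 7} (hx : x ∈ S4') : x ∈ SigmaSet ↔ level x = 1 / 2 := by
  have hs := (mem_S4'_iff.1 hx).2.2
  have hn : ‖x‖ = 1 := mem_sphere_zero_iff_norm.1 hx.1
  rcases le_or_gt 0 (x 0) with h0 | h0
  · simp only [SigmaSet, level, mem_union, mem_ofPred_eq, mem_sphere_zero_iff_norm, hn, h0,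
      max_eq_left h0, not_lt.2 h0, true_and, false_and, or_false]
    exact ⟨fun h => by linarith [h.1], fun h => ⟨by linarith, by linarith⟩⟩
  · simp only [SigmaSet, level, mem_union, mem_ofPred_eq, mem_sphere_zero_iff_norm, hn, h0,
      max_eq_right h0.le, not_le.2 h0, true_and, false_and, false_or]
    exact ⟨fun h => by linarith [h.2], fun h => ⟨by linarith, by linarith⟩⟩

lemma DeltaSigma_eq : DeltaSigma = S4' ∩ {x | level x ≤ 1 / 2} :=
  ext fun _ => ⟨fun h => ⟨DeltaSigma_subset_S4' h,
    (mem_DeltaSigma_iff_of_mem (DeltaSigma_subset_S4' h)).1 h⟩,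
    fun h => (mem_DeltaSigma_iff_of_mem h.1).2 h.2⟩

lemma mem_closure_one_half_lt_level {y : E 7} (hy : y ∈ S4') (hl : level y = 1 / 2) :
    y ∈ closure (S4' ∩ {x | 1 / 2 < level x}) := by
  obtain ⟨hy5, hy6, hs⟩ := mem_S4'_iff.1 hy
  unfold level at hl
  set p := max (y 0) 0
  set q := min (y 0) 0
  have hpq : p * q = 0 := by rcases le_total 0 (y 0) with h | h <;> simp [p, q, h]
  have hy0 : p + q = y 0 := by simp [p, q, max_add_min]
  rw [← hy0] at hs
  set γ : ℝ → E 7 := fun t => !₂[√(1 + t) * p + √(1 - t) * q,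
    √(1 + t) * y 1, √(1 + t) * y 2, √(1 - t) * y 3, √(1 - t) * y 4, 0, 0] with hγ
  have hγ0 : γ 0 = y := by
    ext i
    fin_cases i <;> simp [hγ, hy5, hy6, p, q, max_add_min]
  have hγc : Continuous γ := by fun_prop
  refine mem_closure_of_tendsto (hγ0 ▸ hγc.continuousWithinAt.tendsto (s := Ioi 0)) ?_
  filter_upwards [Ioo_mem_nhdsGT one_pos] with t ⟨ht0, ht1⟩
  have h1 : √(1 + t) ^ 2 = 1 + t := Real.sq_sqrt (by linarith)
  have h2 : √(1 - t) ^ 2 = 1 - t := Real.sq_sqrt (by linarith)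
  have hmax : max (√(1 + t) * p + √(1 - t) * q) 0 = √(1 + t) * p := by
    rcases le_total 0 (y 0) with h | h
    · simp [p, q, h, mul_nonneg (Real.sqrt_nonneg (1 + t)) h]
    · simp [p, q, h, mul_nonpos_of_nonneg_of_nonpos (Real.sqrt_nonneg (1 - t)) h]
  simp only [level, hγ, mem_inter_iff, mem_S4'_iff, mem_ofPred_eq, Matrix.cons_val,
    Matrix.cons_val_zero, Matrix.cons_val_one, hmax, mul_pow, h1, h2, true_and]
  constructor
  · linear_combination (1 - t) * hs + 2 * t * hl + p ^ 2 * h1 + q ^ 2 * h2 +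
      (2 * √(1 + t) * √(1 - t) - 2 * (1 - t)) * hpq
  · linarith [congrArg (t * ·) hl]

theorem frontier_preimage_DeltaSigma :
    frontier ((fun x : S4' => (x : E 7)) ⁻¹' DeltaSigma)
      = (fun x : S4' => (x : E 7)) ⁻¹' SigmaSet := by
  have hDelta : (fun x : S4' => (x : E 7)) ⁻¹' DeltaSigma = {x : S4' | level x ≤ 1 / 2} :=
    ext fun x => mem_DeltaSigma_iff_of_mem x.2
  have hSigma : (fun x : S4' => (x : E 7)) ⁻¹' SigmaSet = {x : S4' | level x = 1 / 2} :=
    ext fun x => mem_SigmaSet_iff_of_mem x.2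
  rw [hDelta, hSigma]
  refine (frontier_le_subset_eq (continuous_level.comp continuous_subtype_val)
    continuous_const).antisymm fun x hx => ?_
  rw [frontier_eq_closure_inter_closure]
  refine ⟨subset_closure (le_of_eq hx), closure_subtype.2 ?_⟩
  convert mem_closure_one_half_lt_level x.2 hx using 2
  ext y
  simp +contextual [not_le]

def outerRadius (c : ℝ) : ℝ := √(1 - c)

def capHeight (c : ℝ) : ℝ := √(1 / 2 - c)

def capScale (c a : ℝ) : ℝ := √((outerRadius c + capHeight c) * (outerRadius c - a))

section Cap

variable {c a : ℝ}

lemma outerRadius_sq (hc : c ≤ 1) : outerRadius c ^ 2 = 1 - c := Real.sq_sqrt (by linarith)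

lemma capHeight_sq (hc : c ≤ 1 / 2) : capHeight c ^ 2 = 1 / 2 - c := Real.sq_sqrt (by linarith)

lemma capHeight_nonneg : 0 ≤ capHeight c := Real.sqrt_nonneg _

lemma capHeight_lt_outerRadius (hc : c ≤ 1 / 2) : capHeight c < outerRadius c :=
  Real.sqrt_lt_sqrt (by linarith) (by linarith)

lemma outerRadius_add_capHeight_pos (hc : c ≤ 1 / 2) : 0 < outerRadius c + capHeight c := by
  linarith [capHeight_nonneg (c := c), capHeight_lt_outerRadius hc]

lemma capScale_sq (ha : a ≤ outerRadius c) :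
    capScale c a ^ 2 = (outerRadius c + capHeight c) * (outerRadius c - a) :=
  Real.sq_sqrt (mul_nonneg (add_nonneg (Real.sqrt_nonneg _) capHeight_nonneg) (sub_nonneg.2 ha))

lemma capScale_pos (hc : c ≤ 1 / 2) (ha : a ≤ capHeight c) : 0 < capScale c a :=
  Real.sqrt_pos.2 (mul_pos (outerRadius_add_capHeight_pos hc)
    (by linarith [capHeight_lt_outerRadius hc]))

end Cap

lemma slice_of_mem_DeltaSigma {x : E 7} (hx : x ∈ DeltaSigma) :
    x 1 ^ 2 + x 2 ^ 2 ≤ 1 / 2 ∧ x 0 ≤ capHeight (x 1 ^ 2 + x 2 ^ 2) := by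
  have hl := (mem_DeltaSigma_iff_of_mem (DeltaSigma_subset_S4' hx)).1 hx
  unfold level at hl
  have hc : x 1 ^ 2 + x 2 ^ 2 ≤ 1 / 2 := by nlinarith [sq_nonneg (max (x 0) 0)]
  exact ⟨hc, (le_max_left _ 0).trans <|
    (Real.le_sqrt (le_max_right _ _) (by linarith)).2 (by linarith)⟩

def bidisk : Set (E 4) := {v | v 0 ^ 2 + v 1 ^ 2 ≤ 1 / 2 ∧ v 2 ^ 2 + v 3 ^ 2 ≤ 1}

def toBidisk (x : E 7) : E 4 :=
  !₂[x 1, x 2, x 3 / capScale (x 1 ^ 2 + x 2 ^ 2) (x 0), x 4 / capScale (x 1 ^ 2 + x 2 ^ 2) (x 0)]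

lemma toBidisk_sq_add_sq {x : E 7} (hx : x ∈ DeltaSigma) :
    toBidisk x 2 ^ 2 + toBidisk x 3 ^ 2 =
      (outerRadius (x 1 ^ 2 + x 2 ^ 2) + x 0) /
        (outerRadius (x 1 ^ 2 + x 2 ^ 2) + capHeight (x 1 ^ 2 + x 2 ^ 2)) := by
  obtain ⟨hc, hH⟩ := slice_of_mem_DeltaSigma hx
  have hs := (mem_S4'_iff.1 (DeltaSigma_subset_S4' hx)).2.2
  have hR := outerRadius_sq (c := x 1 ^ 2 + x 2 ^ 2) (by linarith)
  have hRH := capHeight_lt_outerRadius hc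
  have hRH0 := outerRadius_add_capHeight_pos hc
  simp only [toBidisk, Matrix.cons_val, div_pow, capScale_sq (hH.trans hRH.le), ← add_div]
  rw [div_eq_div_iff (mul_pos hRH0 (by linarith)).ne' hRH0.ne']
  linear_combination (outerRadius (x 1 ^ 2 + x 2 ^ 2) + capHeight (x 1 ^ 2 + x 2 ^ 2)) * (hs - hR)

lemma mapsTo_toBidisk : MapsTo toBidisk DeltaSigma bidisk := by
  intro x hx
  obtain ⟨hc, hH⟩ := slice_of_mem_DeltaSigma hx
  refine ⟨by simpa [toBidisk] using hc, ?_⟩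
  rw [toBidisk_sq_add_sq hx, div_le_one (outerRadius_add_capHeight_pos hc)]
  linarith

lemma injOn_toBidisk : InjOn toBidisk DeltaSigma := by
  intro x hx y hy hxy
  have hcoord (i : Fin 4) : toBidisk x i = toBidisk y i := by rw [hxy]
  have h1 : x 1 = y 1 := by simpa [toBidisk] using hcoord 0
  have h2 : x 2 = y 2 := by simpa [toBidisk] using hcoord 1
  obtain ⟨hc, hH⟩ := slice_of_mem_DeltaSigma hx
  have h0 : x 0 = y 0 := by
    have := toBidisk_sq_add_sq hy
    rw [← hxy, toBidisk_sq_add_sq hx, ← h1, ← h2,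
      div_left_inj' (outerRadius_add_capHeight_pos hc).ne'] at this
    linarith
  have hs := (capScale_pos hc hH).ne'
  have h3 : x 3 = y 3 := by
    simpa [toBidisk, ← h0, ← h1, ← h2, div_left_inj' hs] using hcoord 2
  have h4 : x 4 = y 4 := by
    simpa [toBidisk, ← h0, ← h1, ← h2, div_left_inj' hs] using hcoord 3
  obtain ⟨hx5, hx6, -⟩ := mem_S4'_iff.1 (DeltaSigma_subset_S4' hx)
  obtain ⟨hy5, hy6, -⟩ := mem_S4'_iff.1 (DeltaSigma_subset_S4' hy)
  ext i
  fin_cases i <;> simp [h0, h1, h2, h3, h4, hx5, hx6, hy5, hy6]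

lemma surjOn_toBidisk : SurjOn toBidisk DeltaSigma bidisk := by
  rintro v ⟨hc, hm⟩
  set c := v 0 ^ 2 + v 1 ^ 2 with hc_def
  set R := outerRadius c
  set H := capHeight c
  obtain ⟨a, ha⟩ : ∃ a, a + R = (v 2 ^ 2 + v 3 ^ 2) * (R + H) := ⟨_, sub_add_cancel _ R⟩
  have hRH := capHeight_lt_outerRadius hc
  have hH0 : 0 ≤ H := capHeight_nonneg
  have haH : a ≤ H := by nlinarith
  have hscale := capScale_sq (haH.trans hRH.le)
  have hpos := capScale_pos hc haH
  set s := capScale c a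
  refine ⟨!₂[a, v 0, v 1, s * v 2, s * v 3, 0, 0],
    DeltaSigma_eq ▸ ⟨mem_S4'_iff.2 ⟨by simp, by simp, ?_⟩, ?_⟩, ?_⟩
  · simp only [Matrix.cons_val, mul_pow, hscale]
    linear_combination outerRadius_sq (c := c) (by linarith) - (R - a) * ha - hc_def
  · have hmax : max a 0 ^ 2 ≤ H ^ 2 := pow_le_pow_left₀ (le_max_right a 0) (max_le haH hH0) 2
    simp only [mem_ofPred_eq, level, Matrix.cons_val]
    linarith [capHeight_sq hc]
  · ext i
    fin_cases i <;> simp [toBidisk, s, c, hpos.ne']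

lemma continuousOn_toBidisk : ContinuousOn toBidisk DeltaSigma := by
  have hs : ∀ x ∈ DeltaSigma, capScale (x 1 ^ 2 + x 2 ^ 2) (x 0) ≠ 0 := fun x hx =>
    (capScale_pos (slice_of_mem_DeltaSigma hx).1 (slice_of_mem_DeltaSigma hx).2).ne'
  unfold toBidisk capScale outerRadius capHeight
  fun_prop (disch := assumption)

lemma isCompact_DeltaSigma : IsCompact DeltaSigma := by
  rw [DeltaSigma_eq]
  exact (isCompact_sphere (0 : E 7) 1).of_isClosed_subset
    (isClosed_S4'.inter (isClosed_le continuous_level continuous_const)) fun x hx => hx.1.1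

lemma norm_sq_eq_E4 (v : E 4) : ‖v‖ ^ 2 = v 0 ^ 2 + v 1 ^ 2 + v 2 ^ 2 + v 3 ^ 2 := by
  simp [EuclideanSpace.norm_sq_eq, Fin.sum_univ_four]

lemma convex_bidisk : Convex ℝ bidisk := by
  have h (i : Fin 4) : ConvexOn ℝ univ fun v : E 4 => v i ^ 2 :=
    (Even.convexOn_pow (𝕜 := ℝ) even_two).comp_linearMap
      (EuclideanSpace.proj i : E 4 →L[ℝ] ℝ).toLinearMap
  simpa [bidisk, ofPred_and] using
    (((h 0).add (h 1)).convex_le (1 / 2)).inter (((h 2).add (h 3)).convex_le 1)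

lemma isClosed_bidisk : IsClosed bidisk := by
  rw [bidisk, ofPred_and]
  exact (isClosed_le (by fun_prop) continuous_const).inter
    (isClosed_le (by fun_prop) continuous_const)

lemma isBounded_bidisk : Bornology.IsBounded bidisk := by
  refine (isBounded_closedBall (x := (0 : E 4)) (r := 2)).subset fun v ⟨h01, h23⟩ => ?_
  have := norm_sq_eq_E4 v
  rw [mem_closedBall_zero_iff]
  nlinarith [norm_nonneg v]

lemma interior_bidisk_nonempty : (interior bidisk).Nonempty := by
  refine ⟨0, mem_interior_iff_mem_nhds.2
    (Filter.mem_of_superset (ball_mem_nhds 0 one_half_pos) fun v hv => ?_)⟩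
  have := norm_sq_eq_E4 v
  rw [mem_ball_zero_iff] at hv
  constructor <;> nlinarith [norm_nonneg v, sq_nonneg (v 0), sq_nonneg (v 1), sq_nonneg (v 2),
    sq_nonneg (v 3)]

theorem nonempty_homeomorph_DeltaSigma_closedBall :
    Nonempty (DeltaSigma ≃ₜ closedBall (0 : E 4) 1) := by
  obtain ⟨e₁⟩ := (BijOn.mk mapsTo_toBidisk injOn_toBidisk surjOn_toBidisk
    ).nonempty_homeomorph_of_isCompact isCompact_DeltaSigma continuousOn_toBidisk
  obtain ⟨e₂⟩ := convex_bidisk.nonempty_homeomorph_closedBall isClosed_bidisk isBounded_bidisk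
    interior_bidisk_nonempty
  exact ⟨e₁.trans e₂⟩

end SigmaDisk

theorem statement4 :
    Nonempty (DeltaSigma ≃ₜ (Metric.closedBall (0 : E 4) 1)) ∧
    frontier ((fun x : S4' => (x : E 7)) ⁻¹' DeltaSigma)
      = (fun x : S4' => (x : E 7)) ⁻¹' SigmaSet :=
  ⟨SigmaDisk.nonempty_homeomorph_DeltaSigma_closedBall, SigmaDisk.frontier_preimage_DeltaSigma⟩
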